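/- arXiv:1508.05501 — 4 statements merged into one kernel-verified Lean document; each statement's English description precedes it below -/
import Mathlib

section
/- Let q be a prime and let C = ⊕_{g∈Z_q} C_g be a faithful Z_q-grading of a fusion category C such that C_0 is pointed. Then either C is pointed, or C_0 equals C_pt, the largest pointed fusion subcategory of C. -/
/-!
A Grothendieck-ring (fusion ring) level formalization of fusion categories.
`Fin n` indexes the isomorphism classes of simple objects, `N i j k` is the
multiplicity of the simple `k` in the tensor product `i ⊗ j`, `dim` records the
Frobenius–Perron dimensions of the simple objects.
-/

/-- The Grothendieck-ring data of a fusion category. -/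
structure FusionData where
  n : ℕ
  npos : 0 < n
  one : Fin n
  dual : Fin n → Fin n
  N : Fin n → Fin n → Fin n → ℕ
  dim : Fin n → ℝ
  dim_ge_one : ∀ i, 1 ≤ dim i
  dim_one : dim one = 1
  dim_dual : ∀ i, dim (dual i) = dim i
  dim_mul : ∀ i j, dim i * dim j = ∑ k, (N i j k : ℝ) * dim k
  N_one_left : ∀ i k, N one i k = if k = i then 1 else 0
  N_one_right : ∀ i k, N i one k = if k = i then 1 else 0
  N_dual : ∀ i j, N i j one = if j = dual i then 1 else 0
  dual_dual : ∀ i, dual (dual i) = i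
  N_assoc : ∀ i j k l, ∑ m, N i j m * N m k l = ∑ m, N j k m * N i m l

namespace FusionData

/-- The index type of (iso classes of) simple objects. -/
abbrev I (C : FusionData) : Type := Fin C.n

/-- A simple object is invertible iff its FP dimension is `1`. -/
def Invertible (C : FusionData) (i : C.I) : Prop := C.dim i = 1

/-- A fusion category is pointed if all its simple objects are invertible. -/
def Pointed (C : FusionData) : Prop := ∀ i : C.I, C.dim i = 1

/-- The Frobenius–Perron dimension of the category. -/
noncomputable def FPdim (C : FusionData) : ℝ := ∑ i : C.I, C.dim i ^ 2

open Classical in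
/-- The FP dimension of the full subcategory spanned by a set of simples. -/
noncomputable def FPdimSet (C : FusionData) (S : Set C.I) : ℝ :=
  ∑ i : C.I, if i ∈ S then C.dim i ^ 2 else 0

open Classical in
/-- The number of iso classes of invertible objects, i.e. the order of `G(C)`. -/
noncomputable def numInv (C : FusionData) : ℕ :=
  (Finset.univ.filter fun i : C.I => C.dim i = 1).card

/-- A fusion subcategory: a set of simples containing the unit and closed under
duals and under taking simple constituents of tensor products. -/
structure Sub (C : FusionData) where
  carrier : Set C.I
  one_mem : C.one ∈ carrier
  dual_mem : ∀ i ∈ carrier, C.dual i ∈ carrier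
  mul_mem : ∀ i ∈ carrier, ∀ j ∈ carrier, ∀ k, 0 < C.N i j k → k ∈ carrier

/-- The simples of the fusion subcategory generated by a set `S` of simples. -/
inductive gen (C : FusionData) (S : Set C.I) : C.I → Prop
  | base {i} : i ∈ S → gen C S i
  | one : gen C S C.one
  | dual {i} : gen C S i → gen C S (C.dual i)
  | mul {i j k} : gen C S i → gen C S j → 0 < C.N i j k → gen C S k

/-- Simple constituents of the objects `X ⊗ X⋆`, `X` simple. -/
def adjointGenerators (C : FusionData) : Set C.I := {k | ∃ i, 0 < C.N i (C.dual i) k}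

/-- The set of simple objects of the adjoint subcategory `C_ad`. -/
def adSet (C : FusionData) : Set C.I := {k | C.gen C.adjointGenerators k}

/-- The set of simples of `C_pt`, the largest pointed fusion subcategory. -/
def ptSet (C : FusionData) : Set C.I := {i | C.dim i = 1}

/-- The ring-level shadow of a braiding: the Grothendieck ring of a braided
fusion category is commutative. -/
def Braided (C : FusionData) : Prop := ∀ i j k, C.N i j k = C.N j i k

/-- Integrality: every simple object has integer FP dimension. -/
def Integral (C : FusionData) : Prop := ∀ i : C.I, ∃ m : ℕ, C.dim i = (m : ℝ)

/-- Generalized Tambara–Yamagami: non-pointed, and the tensor product of any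
two non-invertible simples is a direct sum of invertibles. -/
def GeneralizedTY (C : FusionData) : Prop :=
  ¬ C.Pointed ∧ ∀ i j : C.I, C.dim i ≠ 1 → C.dim j ≠ 1 →
    ∀ k, 0 < C.N i j k → C.dim k = 1

/-- A grading of `C` by a group `G`. -/
structure Grading (C : FusionData) (G : Type*) [Group G] where
  deg : C.I → G
  deg_one : deg C.one = 1
  deg_mul : ∀ i j k, 0 < C.N i j k → deg k = deg i * deg j
  deg_dual : ∀ i, deg (C.dual i) = (deg i)⁻¹

/-- A grading is faithful if every component is nonzero, equivalently the
degree map is surjective. -/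
def Grading.Faithful {C : FusionData} {G : Type*} [Group G] (g : C.Grading G) : Prop :=
  Function.Surjective g.deg

/-- A `ℤ_q`-extension of a pointed fusion category: a faithful `ℤ_q`-grading
whose trivial component is pointed. -/
structure ZqExtension (C : FusionData) (q : ℕ) where
  grading : C.Grading (Multiplicative (ZMod q))
  faithful : Function.Surjective grading.deg
  trivial_pointed : ∀ i, grading.deg i = 1 → C.dim i = 1

/-- `C` is tensor equivalent to the Deligne product `B ⊠ E`. -/
def IsDeligneProd (C B E : FusionData) : Prop :=
  ∃ e : C.I ≃ B.I × E.I,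
    e C.one = (B.one, E.one) ∧
    (∀ i, e (C.dual i) = (B.dual (e i).1, E.dual (e i).2)) ∧
    (∀ i j k, C.N i j k = B.N (e i).1 (e j).1 (e k).1 * E.N (e i).2 (e j).2 (e k).2) ∧
    (∀ i, C.dim i = B.dim (e i).1 * E.dim (e i).2)

/-- `C` is tensor equivalent to the Deligne product of the finite family `F`. -/
def IsDelignePi (C : FusionData) {t : ℕ} (F : Fin t → FusionData) : Prop :=
  ∃ e : C.I ≃ ∀ s, (F s).I,
    (e C.one = fun s => (F s).one) ∧
    (∀ i s, e (C.dual i) s = (F s).dual (e i s)) ∧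
    (∀ i j k, C.N i j k = ∏ s, (F s).N (e i s) (e j s) (e k s)) ∧
    (∀ i, C.dim i = ∏ s, (F s).dim (e i s))

/-- A fusion category of type `(1, m; α, n)`: `m` invertible simples, `n`
simples of FP dimension `α > 1`, and no others. -/
def OfType₂ (C : FusionData) (α : ℝ) (m n : ℕ) : Prop :=
  1 < α ∧ (∀ i : C.I, C.dim i = 1 ∨ C.dim i = α) ∧
    Nat.card {i : C.I // C.dim i = 1} = m ∧ Nat.card {i : C.I // C.dim i = α} = n

/-- An Ising category: three simples `1, g, X` with `g` invertible, `g ≠ 1`,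
`FPdim X = √2` and `X ⊗ X ≅ 1 ⊕ g`. -/
def IsIsing (C : FusionData) : Prop :=
  C.n = 3 ∧ ¬ C.Pointed ∧ C.FPdim = 4 ∧
    ∃ g X : C.I, g ≠ C.one ∧ C.dim g = 1 ∧ C.dim X = Real.sqrt 2 ∧ C.dual X = X ∧
      C.N X X C.one = 1 ∧ C.N X X g = 1 ∧ ∀ k, 0 < C.N X X k → k = C.one ∨ k = g

/-- Modularity at the Grothendieck-ring level: braided together with a
symmetric nondegenerate S-matrix satisfying the Verlinde relations and
normalized by FP dimensions on the row of the unit. -/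
def Modular (C : FusionData) : Prop :=
  C.Braided ∧
    ∃ s : Matrix C.I C.I ℂ,
      (∀ i j, s i j = s j i) ∧
      (∀ i, s C.one i = (C.dim i : ℂ)) ∧
      (∀ i j k, s i j * s i k = (C.dim i : ℂ) * ∑ l, (C.N j k l : ℂ) * s i l) ∧
      IsUnit s

/-- A ring-level Morita context between two fusion categories: a based
`(C, D)`-bimodule with commuting indecomposable actions and equal global
FP dimensions. -/
structure MoritaContext (C D : FusionData) where
  m : ℕ
  actL : C.I → Fin m → Fin m → ℕ
  actR : D.I → Fin m → Fin m → ℕ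
  actL_one : ∀ x y, actL C.one x y = if y = x then 1 else 0
  actR_one : ∀ x y, actR D.one x y = if y = x then 1 else 0
  actL_assoc : ∀ i j x z, (∑ k, C.N i j k * actL k x z) = ∑ y, actL j x y * actL i y z
  actR_assoc : ∀ i j x z, (∑ k, D.N i j k * actR k x z) = ∑ y, actR i x y * actR j y z
  commute : ∀ i j x z, (∑ y, actL i x y * actR j y z) = ∑ y, actR j x y * actL i y z
  indecL : ∀ x y, ∃ i, 0 < actL i x y
  indecR : ∀ x y, ∃ j, 0 < actR j x y
  fpdim_eq : C.FPdim = D.FPdim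

/-- (Categorical) Morita equivalence, encoded at the ring level. -/
def MoritaEquiv (C D : FusionData) : Prop := Nonempty (MoritaContext C D)

/-- Group-theoretical: Morita equivalent to a pointed fusion category. -/
def GroupTheoretical (C : FusionData) : Prop :=
  ∃ D : FusionData, D.Pointed ∧ MoritaEquiv C D

end FusionData


namespace FusionData

lemma dim_pos' (C : FusionData) (i : C.I) : 0 < C.dim i :=
  lt_of_lt_of_le one_pos (C.dim_ge_one i)

lemma exists_constituent' (C : FusionData) (i j : C.I) : ∃ k, 0 < C.N i j k := by
  by_contra h
  push_neg at h
  have h0 : ∀ k, C.N i j k = 0 := fun k => Nat.le_zero.mp (h k)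
  have hm := C.dim_mul i j
  simp [h0] at hm
  rcases hm with h1 | h1 <;> linarith [C.dim_pos' i, C.dim_pos' j]

lemma dim_le_of_constituent' (C : FusionData) {i j k : C.I} (h : 0 < C.N i j k) :
    C.dim k ≤ C.dim i * C.dim j := by
  rw [C.dim_mul i j]
  have h1 : C.dim k ≤ (C.N i j k : ℝ) * C.dim k := by
    nlinarith [C.dim_pos' k, (by exact_mod_cast h : (1:ℝ) ≤ (C.N i j k : ℝ))]
  refine h1.trans (Finset.single_le_sum (f := fun m => (C.N i j m : ℝ) * C.dim m) ?_
    (Finset.mem_univ k))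
  intro m _
  exact mul_nonneg (Nat.cast_nonneg _) (le_of_lt (C.dim_pos' m))

lemma dual_injective' (C : FusionData) : Function.Injective C.dual := fun a b h => by
  have h2 := congrArg C.dual h
  rwa [C.dual_dual, C.dual_dual] at h2

lemma reciprocity' (C : FusionData) (i j k : C.I) :
    C.N i j k = C.N j (C.dual k) (C.dual i) := by
  have h := C.N_assoc i j (C.dual k) C.one
  have hl : ∑ m, C.N i j m * C.N m (C.dual k) C.one = C.N i j k := by
    rw [Finset.sum_eq_single k]
    · rw [C.N_dual k (C.dual k), if_pos rfl, mul_one]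
    · intro m _ hm
      rw [C.N_dual, if_neg, mul_zero]
      exact fun he => hm (C.dual_injective' he.symm)
    · simp
  have hr : ∑ m, C.N j (C.dual k) m * C.N i m C.one = C.N j (C.dual k) (C.dual i) := by
    rw [Finset.sum_eq_single (C.dual i)]
    · rw [C.N_dual i (C.dual i), if_pos rfl, mul_one]
    · intro m _ hm
      rw [C.N_dual, if_neg hm, mul_zero]
    · simp
  rw [hl, hr] at h
  exact h

lemma exists_inv_of_pow' (C : FusionData) {G : Type*} [Group G] (gr : C.Grading G)
    {i : C.I} (hi : C.dim i = 1) :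
    ∀ k : ℕ, ∃ u, C.dim u = 1 ∧ gr.deg u = (gr.deg i) ^ k := by
  intro k
  induction k with
  | zero => exact ⟨C.one, C.dim_one, by simp [gr.deg_one]⟩
  | succ k ih =>
    obtain ⟨u, hud, hug⟩ := ih
    obtain ⟨m, hm⟩ := C.exists_constituent' u i
    refine ⟨m, ?_, ?_⟩
    · have h1 := C.dim_le_of_constituent' hm
      have h2 := C.dim_ge_one m
      rw [hud, hi] at h1
      linarith
    · rw [gr.deg_mul u i m hm, hug, pow_succ]

end FusionData

open FusionData in
/-- If a fusion category has a faithful `ℤ_q`-grading (`q` prime)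
with pointed trivial component `C_0`, then either `C` is pointed or
`C_0 = C_pt` is the largest pointed fusion subcategory of `C`. -/
theorem pointed_or_trivial_component_eq_pt
    (q : ℕ) (hq : q.Prime) (C : FusionData)
    (g : C.Grading (Multiplicative (ZMod q))) (hfaith : g.Faithful)
    (htriv : ∀ i : C.I, g.deg i = 1 → C.dim i = 1) :
    C.Pointed ∨ {i : C.I | g.deg i = 1} = C.ptSet := by
  by_cases hex : ∃ i : C.I, C.dim i = 1 ∧ g.deg i ≠ 1
  · left
    obtain ⟨u0, hu0dim, hu0deg⟩ := hex
    intro j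
    haveI := Fact.mk hq
    haveI : NeZero q := ⟨hq.pos.ne'⟩
    have ha : Multiplicative.toAdd (g.deg u0) ≠ 0 := by
      intro h0
      exact hu0deg (Multiplicative.toAdd.injective (by simpa using h0))
    obtain ⟨k, hk⟩ : ∃ k : ℕ, (g.deg u0) ^ k = (g.deg j)⁻¹ := by
      set a := Multiplicative.toAdd (g.deg u0) with hadef
      set b := Multiplicative.toAdd (g.deg j)⁻¹ with hbdef
      refine ⟨(b / a).val, Multiplicative.toAdd.injective ?_⟩
      rw [toAdd_pow, nsmul_eq_mul, ZMod.natCast_val, ZMod.cast_id,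
        div_mul_cancel₀ _ ha]
    obtain ⟨u, hud, hug⟩ := C.exists_inv_of_pow' g hu0dim k
    obtain ⟨m, hm⟩ := C.exists_constituent' j u
    have hdm : C.dim m = 1 := by
      apply htriv m
      rw [g.deg_mul j u m hm, hug, hk, mul_inv_cancel]
    have hrec : 0 < C.N u (C.dual m) (C.dual j) := by
      rw [← C.reciprocity']
      exact hm
    have hle := C.dim_le_of_constituent' hrec
    rw [hud, C.dim_dual, C.dim_dual, hdm] at hle
    have := C.dim_ge_one j
    linarith
  · right
    ext i
    simp only [Set.mem_setOf_eq, ptSet]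
    constructor
    · exact htriv i
    · intro hdim
      by_contra hdeg
      exact hex ⟨i, hdim, hdeg⟩
end

section
/- Let C be a Z_q-extension of a pointed fusion category (q prime) that is not pointed. Then C is a generalized Tambara-Yamagami fusion category if and only if q = 2. -/
namespace FusionData

/-- Tensoring a simple with an invertible yields a simple of the same dimension. -/
lemma inv_tensor' (C : FusionData) (u X : C.I) (hu : C.dim u = 1) :
    ∃ m, 0 < C.N u X m ∧ C.dim m = C.dim X := by
  have hdd : C.dual (C.dual u) = u := C.dual_dual u
  have hu' : C.dim (C.dual u) = 1 := by rw [C.dim_dual]; exact hu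
  have hB1 : C.N (C.dual u) u C.one = 1 := by
    rw [C.N_dual]; simp [hdd]
  -- `(dual u) ⊗ u` is exactly the unit
  have hBz : ∀ k, k ≠ C.one → C.N (C.dual u) u k = 0 := by
    have hsum : (∑ k, (C.N (C.dual u) u k : ℝ) * C.dim k) = 1 := by
      rw [← C.dim_mul, hu', hu]; ring
    have herase : (∑ k ∈ Finset.univ.erase C.one,
        (C.N (C.dual u) u k : ℝ) * C.dim k) = 0 := by
      have hsplit := Finset.sum_erase_add Finset.univ
        (fun k => (C.N (C.dual u) u k : ℝ) * C.dim k) (Finset.mem_univ C.one)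
      simp only [hsum, hB1, C.dim_one, Nat.cast_one, one_mul] at hsplit
      linarith
    intro k hk
    have hk' : k ∈ Finset.univ.erase C.one := Finset.mem_erase.mpr ⟨hk, Finset.mem_univ k⟩
    have hz := (Finset.sum_eq_zero_iff_of_nonneg (fun i _ =>
      mul_nonneg (Nat.cast_nonneg _) (le_of_lt (C.dim_pos' i)))).mp herase k hk'
    rcases mul_eq_zero.mp hz with h | h
    · exact_mod_cast h
    · exact absurd h (ne_of_gt (C.dim_pos' k))
  have hA := C.N_assoc (C.dual u) u X X
  have hLHS : (∑ m, C.N (C.dual u) u m * C.N m X X) = 1 := by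
    rw [Finset.sum_eq_single C.one
      (fun b _ hb => by rw [hBz b hb, zero_mul])
      (fun h => absurd (Finset.mem_univ _) h)]
    rw [hB1, C.N_one_left]
    simp
  rw [hLHS] at hA
  have hne : (∑ m, C.N u X m * C.N (C.dual u) m X) ≠ 0 := by omega
  obtain ⟨m₀, -, hm₀⟩ := Finset.exists_ne_zero_of_sum_ne_zero hne
  have h1 : 0 < C.N u X m₀ := Nat.pos_of_ne_zero (by
    intro h; exact hm₀ (by rw [h, zero_mul]))
  have h2 : 0 < C.N (C.dual u) m₀ X := Nat.pos_of_ne_zero (by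
    intro h; exact hm₀ (by rw [h, mul_zero]))
  refine ⟨m₀, h1, ?_⟩
  have hs1 : (C.N (C.dual u) m₀ X : ℝ) * C.dim X ≤
      ∑ k, (C.N (C.dual u) m₀ k : ℝ) * C.dim k :=
    Finset.single_le_sum (f := fun k => (C.N (C.dual u) m₀ k : ℝ) * C.dim k) (fun k _ =>
      mul_nonneg (Nat.cast_nonneg _) (le_of_lt (C.dim_pos' k))) (Finset.mem_univ X)
  rw [← C.dim_mul, hu', one_mul] at hs1
  have hs2 : (C.N u X m₀ : ℝ) * C.dim m₀ ≤ ∑ k, (C.N u X k : ℝ) * C.dim k :=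
    Finset.single_le_sum (f := fun k => (C.N u X k : ℝ) * C.dim k) (fun k _ =>
      mul_nonneg (Nat.cast_nonneg _) (le_of_lt (C.dim_pos' k))) (Finset.mem_univ m₀)
  rw [← C.dim_mul, hu, one_mul] at hs2
  have hc1 : (1 : ℝ) ≤ (C.N (C.dual u) m₀ X : ℝ) := by exact_mod_cast h2
  have hc2 : (1 : ℝ) ≤ (C.N u X m₀ : ℝ) := by exact_mod_cast h1
  nlinarith [C.dim_pos' X, C.dim_pos' m₀]

end FusionData

open FusionData in
/-- A non-pointed `ℤ_q`-extension of a pointed fusion category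
(`q` prime) is a generalized Tambara–Yamagami category iff `q = 2`. -/
theorem generalizedTY_iff_q_eq_two
    (q : ℕ) (hq : q.Prime) (C : FusionData) (ext : C.ZqExtension q)
    (hnp : ¬ C.Pointed) :
    C.GeneralizedTY ↔ q = 2 := by
  constructor
  · rintro ⟨-, hTY⟩
    by_contra hq2
    haveI : NeZero q := ⟨hq.pos.ne'⟩
    obtain ⟨X, hX⟩ := not_forall.mp hnp
    set g := ext.grading.deg X with hg
    obtain ⟨k₀, hk₀⟩ := C.exists_constituent' X X
    have hk₀dim : C.dim k₀ = 1 := hTY X X hX hX k₀ hk₀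
    have hk₀deg : ext.grading.deg k₀ = g * g := ext.grading.deg_mul X X k₀ hk₀
    have key : ∀ n : ℕ, ∃ v, C.dim v = 1 ∧ ext.grading.deg v = g ^ (2 * n) := by
      intro n
      induction n with
      | zero => exact ⟨C.one, C.dim_one, by rw [ext.grading.deg_one, Nat.mul_zero, pow_zero]⟩
      | succ n ih =>
        obtain ⟨v, hv1, hvd⟩ := ih
        obtain ⟨m, hm, hmdim⟩ := C.inv_tensor' v k₀ hv1
        refine ⟨m, by rw [hmdim, hk₀dim], ?_⟩
        rw [ext.grading.deg_mul v k₀ m hm, hvd, hk₀deg, Nat.mul_succ, pow_add, pow_two]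
    have h2ne : (2 : ZMod q) ≠ 0 := by
      intro h
      have hdvd : q ∣ 2 := by
        have : ((2 : ℕ) : ZMod q) = 0 := by exact_mod_cast h
        exact (ZMod.natCast_eq_zero_iff 2 q).mp this
      exact hq2 ((Nat.prime_dvd_prime_iff_eq hq Nat.prime_two).mp hdvd)
    haveI : Fact q.Prime := ⟨hq⟩
    set n : ℕ := ((2 : ZMod q)⁻¹).val with hn
    have hncast : ((n : ℕ) : ZMod q) = (2 : ZMod q)⁻¹ := by
      rw [hn, ZMod.natCast_val, ZMod.cast_id]
    have hgn : g ^ (2 * n) = g := by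
      have ha : (2 * n : ℕ) • g.toAdd = g.toAdd := by
        rw [nsmul_eq_mul]
        push_cast
        rw [hncast, mul_inv_cancel₀ h2ne, one_mul]
      calc g ^ (2 * n) = Multiplicative.ofAdd ((2 * n) • g.toAdd) := by
            rw [ofAdd_nsmul, ofAdd_toAdd]
        _ = g := by rw [ha, ofAdd_toAdd]
    obtain ⟨v, hv1, hvd⟩ := key n
    have hvdual : C.dim (C.dual v) = 1 := by rw [C.dim_dual]; exact hv1
    obtain ⟨m, hm, hmdim⟩ := C.inv_tensor' (C.dual v) X hvdual
    have hdm : ext.grading.deg m = 1 := by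
      rw [ext.grading.deg_mul _ _ _ hm, ext.grading.deg_dual, hvd, hgn, ← hg,
        inv_mul_cancel]
    exact hX (by rw [← hmdim]; exact ext.trivial_pointed m hdm)
  · intro h
    subst h
    refine ⟨hnp, fun i j hi hj k hk => ?_⟩
    apply ext.trivial_pointed
    rw [ext.grading.deg_mul i j k hk]
    have hdi : ext.grading.deg i ≠ 1 := fun h => hi (ext.trivial_pointed i h)
    have hdj : ext.grading.deg j ≠ 1 := fun h => hj (ext.trivial_pointed j h)
    revert hdi hdj
    generalize ext.grading.deg i = x
    generalize ext.grading.deg j = y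
    revert x y
    decide
end

section
/- Let C be a braided Z_q-extension of a pointed fusion category with q an odd prime (q > 2). Then C is integral. -/
namespace FusionData

/-- Multiplicity vector of the iterated tensor power `X ^ ⊗ m`. -/
def powVec (C : FusionData) (X : C.I) : ℕ → C.I → ℕ
  | 0 => fun k => if k = C.one then 1 else 0
  | (m+1) => fun l => ∑ k, powVec C X m k * C.N k X l

lemma powVec_dim (C : FusionData) (X : C.I) (m : ℕ) :
    ∑ k, (powVec C X m k : ℝ) * C.dim k = C.dim X ^ m := by
  induction m with
  | zero =>
    simp [powVec, apply_ite (Nat.cast : ℕ → ℝ), ite_mul, C.dim_one]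
  | succ m ih =>
    calc ∑ l, (powVec C X (m+1) l : ℝ) * C.dim l
        = ∑ l, ∑ k, (powVec C X m k : ℝ) * ((C.N k X l : ℝ) * C.dim l) := by
          simp only [powVec]
          refine Finset.sum_congr rfl fun l _ => ?_
          push_cast
          rw [Finset.sum_mul]
          exact Finset.sum_congr rfl fun k _ => by ring
      _ = ∑ k, (powVec C X m k : ℝ) * ∑ l, (C.N k X l : ℝ) * C.dim l := by
          rw [Finset.sum_comm]
          exact Finset.sum_congr rfl fun k _ => by rw [Finset.mul_sum]
      _ = ∑ k, (powVec C X m k : ℝ) * (C.dim k * C.dim X) := by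
          refine Finset.sum_congr rfl fun k _ => ?_
          rw [← C.dim_mul]
      _ = (∑ k, (powVec C X m k : ℝ) * C.dim k) * C.dim X := by
          rw [Finset.sum_mul]
          exact Finset.sum_congr rfl fun k _ => by ring
      _ = C.dim X ^ (m+1) := by rw [ih, pow_succ]

lemma powVec_deg (C : FusionData) {G : Type*} [Group G] (g : C.Grading G) (X : C.I)
    (m : ℕ) (k : C.I) (h : 0 < powVec C X m k) : g.deg k = (g.deg X) ^ m := by
  induction m generalizing k with
  | zero =>
    simp only [powVec] at h
    split_ifs at h with hk
    · subst hk; simp [g.deg_one]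
    · exact absurd h (by simp)
  | succ m ih =>
    simp only [powVec] at h
    obtain ⟨k', -, hk'⟩ := Finset.exists_ne_zero_of_sum_ne_zero h.ne'
    rw [Nat.mul_ne_zero_iff] at hk'
    rw [g.deg_mul k' X k (Nat.pos_of_ne_zero hk'.2), ih k' (Nat.pos_of_ne_zero hk'.1),
      pow_succ]

end FusionData

open FusionData in
/-- A braided `ℤ_q`-extension of a pointed fusion category with
`q` an odd prime is integral. -/
theorem braided_extension_integral_of_odd
    (q : ℕ) (hq : q.Prime) (hq2 : 2 < q) (C : FusionData) (hbr : C.Braided)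
    (ext : C.ZqExtension q) :
    C.Integral := by
  intro X
  set d := C.dim X with hd
  have hd1 : 1 ≤ d := C.dim_ge_one X
  -- the degree of X has order dividing q
  have hxq : (ext.grading.deg X) ^ q = 1 := by
    set x := ext.grading.deg X
    have : x ^ q = Multiplicative.ofAdd (q • Multiplicative.toAdd x) := by
      rw [ofAdd_nsmul, ofAdd_toAdd]
    rw [this, nsmul_eq_mul, ZMod.natCast_self, zero_mul, ofAdd_zero]
  -- d ^ 2 is a natural number
  set a : ℕ := ∑ k, C.N X (C.dual X) k with ha
  have hsq : d ^ 2 = (a : ℝ) := by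
    have h1 : d ^ 2 = C.dim X * C.dim (C.dual X) := by rw [C.dim_dual, hd, sq]
    rw [h1, C.dim_mul, ha]
    push_cast
    refine Finset.sum_congr rfl fun k _ => ?_
    by_cases hk : 0 < C.N X (C.dual X) k
    · have hdeg : ext.grading.deg k = 1 := by
        rw [ext.grading.deg_mul _ _ _ hk, ext.grading.deg_dual, mul_inv_cancel]
      rw [ext.trivial_pointed k hdeg, mul_one]
    · have : C.N X (C.dual X) k = 0 := Nat.eq_zero_of_not_pos hk
      simp [this]
  -- d ^ q is a natural number
  set b : ℕ := ∑ k, powVec C X q k with hb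
  have hqn : d ^ q = (b : ℝ) := by
    rw [← C.powVec_dim X q, hb]
    push_cast
    refine Finset.sum_congr rfl fun k _ => ?_
    by_cases hk : 0 < powVec C X q k
    · have hdeg : ext.grading.deg k = 1 := by
        rw [C.powVec_deg ext.grading X q k hk, hxq]
      rw [ext.trivial_pointed k hdeg, mul_one]
    · have : powVec C X q k = 0 := Nat.eq_zero_of_not_pos hk
      simp [this]
  -- q = 2 t + 1
  have hodd : q % 2 = 1 := Nat.odd_iff.mp (hq.odd_of_ne_two (by omega))
  obtain ⟨t, ht⟩ : ∃ t, q = 2 * t + 1 := ⟨q / 2, by omega⟩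
  have ha1 : (1 : ℝ) ≤ (a : ℝ) := by
    rw [← hsq]
    exact one_le_pow₀ hd1
  have ha0 : (a : ℝ) ^ t ≠ 0 := by positivity
  -- d is rational
  have hdr : d = ((b : ℚ) / (a : ℚ) ^ t : ℚ) := by
    have : d ^ q = (a : ℝ) ^ t * d := by
      rw [ht, pow_succ, pow_mul, ← hsq]
    rw [hqn] at this
    push_cast
    rw [eq_div_iff ha0, mul_comm, ← this]
  by_cases hint : ∃ y : ℤ, d = y
  · obtain ⟨y, hy⟩ := hint
    have hy1 : (1 : ℤ) ≤ y := by exact_mod_cast hd1.trans_eq hy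
    refine ⟨y.toNat, ?_⟩
    rw [hy]
    norm_cast
    omega
  · have hirr : Irrational d :=
      irrational_nrt_of_notint_nrt 2 (a : ℤ) (by exact_mod_cast hsq) hint (by norm_num)
    exact absurd (hdr ▸ hirr) (Rat.not_irrational _)
end

section
/- Let C be a braided nilpotent fusion category with decomposition C ≅ ⊠_i C_{p_i} into braided fusion categories of distinct prime power FP dimensions. If every simple object of C has FP dimension 1 or α for a fixed α > 1, then at most one factor C_{p_i} contains a non-invertible simple object. -/
open FusionData in
/-- If a braided nilpotent fusion category decomposes as a
Deligne product of braided fusion categories of pairwise distinct prime power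
FP dimensions and all its simples have dimension `1` or `α`, then at most one
factor contains a non-invertible simple. -/
theorem at_most_one_noninvertible_factor
    (C : FusionData) (hbr : C.Braided) (t : ℕ) (F : Fin t → FusionData)
    (hFbr : ∀ s, (F s).Braided)
    (p : Fin t → ℕ) (k : Fin t → ℕ) (hp : ∀ s, (p s).Prime)
    (hpow : ∀ s, (F s).FPdim = (p s : ℝ) ^ k s) (hpinj : Function.Injective p)
    (hdec : C.IsDelignePi F)
    (α : ℝ) (hα : 1 < α) (hdims : ∀ i : C.I, C.dim i = 1 ∨ C.dim i = α) :
    ∀ s₁ s₂ : Fin t, (∃ x : (F s₁).I, (F s₁).dim x ≠ 1) →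
      (∃ y : (F s₂).I, (F s₂).dim y ≠ 1) → s₁ = s₂ := by

  obtain ⟨e, hone, hdual, hN, hdim⟩ := hdec
  rintro s₁ s₂ ⟨x, hx⟩ ⟨y, hy⟩
  by_contra hne
  have key : ∀ (f : ∀ s, (F s).I), C.dim (e.symm f) = ∏ s, (F s).dim (f s) := by
    intro f
    rw [hdim]
    apply Finset.prod_congr rfl
    intro s _
    rw [e.apply_symm_apply]
  have hxα : (F s₁).dim x = α := by
    have h1 : C.dim (e.symm (Function.update (fun s => (F s).one) s₁ x))
        = (F s₁).dim x := by
      rw [key, Finset.prod_eq_single s₁]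
      · simp
      · intro b _ hb
        rw [Function.update_of_ne hb, (F b).dim_one]
      · simp
    rcases hdims (e.symm (Function.update (fun s => (F s).one) s₁ x)) with h | h
    · exact absurd (h1 ▸ h) hx
    · rw [← h1, h]
  have hyα : (F s₂).dim y = α := by
    have h1 : C.dim (e.symm (Function.update (fun s => (F s).one) s₂ y))
        = (F s₂).dim y := by
      rw [key, Finset.prod_eq_single s₂]
      · simp
      · intro b _ hb
        rw [Function.update_of_ne hb, (F b).dim_one]
      · simp
    rcases hdims (e.symm (Function.update (fun s => (F s).one) s₂ y)) with h | h
    · exact absurd (h1 ▸ h) hy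
    · rw [← h1, h]
  set g : ∀ s, (F s).I := Function.update (Function.update (fun s => (F s).one) s₁ x) s₂ y with hg
  have h2 : C.dim (e.symm g) = α * α := by
    rw [key, Finset.prod_eq_mul s₁ s₂ hne]
    · rw [hg, Function.update_of_ne hne, Function.update_self,
        Function.update_self, hxα, hyα]
    · intro c _ ⟨hc1, hc2⟩
      rw [hg, Function.update_of_ne hc2, Function.update_of_ne hc1, (F c).dim_one]
    · simp
    · simp
  rcases hdims (e.symm g) with h | h <;> rw [h2] at h <;> nlinarith
end
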